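/- arXiv:2005.04113 — 2 statements merged into one kernel-verified Lean document; each statement's English description precedes it below -/
import Mathlib

section
/- Let n ≥ 1, let g : ℝ → ℝ be defined by g(t) = sin(t)/t for t ≠ 0 and g(0) = 1, and for each integer k ≥ 1 define H_k : ℝⁿ → ℝ by H_k(ξ) = ∏_{i=1}^n g(πξ_i/k)^{2k}. Then for every integer k ≥ 1 and every η = (η_1,…,η_n) ∈ ℝⁿ with ‖η‖ ≥ k, one has e^k · H_k(√n·η) ≤ 1, where √n·η = (√n η_1, …, √n η_n) and ‖η‖ = (Σ_{i=1}^n η_i²)^{1/2}. -/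
/-!
The hypotheses force `g = sinc`. Every factor `sinc (π x / k) ^ (2 k)` lies in `[0, 1]`, and the
coordinate of `√n η` of largest modulus has modulus at least `‖η‖ ≥ k`; there
`|π x / k| ≥ π`, so that factor is at most `π ^ (-2 k)`. Hence the product is at most
`π ^ (-2 k)`, and `e ^ k π ^ (-2 k) ≤ 1` because `e ≤ π ^ 2`.
-/

open Real

theorem EuclideanSpace.exists_norm_le_sqrt_card_mul_abs {ι : Type*} [Fintype ι] [Nonempty ι]
    (x : EuclideanSpace ℝ ι) : ∃ i, ‖x‖ ≤ √(Fintype.card ι) * |x i| := by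
  obtain ⟨i, hi⟩ := Finite.exists_max fun j => |x j|
  refine ⟨i, ?_⟩
  calc ‖x‖ = √(∑ j, |x j| ^ 2) := by simp [EuclideanSpace.norm_eq]
    _ ≤ √(∑ _ : ι, |x i| ^ 2) :=
      Real.sqrt_le_sqrt (Finset.sum_le_sum fun j _ => pow_le_pow_left₀ (abs_nonneg _) (hi j) 2)
    _ = √(Fintype.card ι) * |x i| := by simp [Real.sqrt_mul, Real.sqrt_sq_eq_abs]

namespace Real

theorem abs_sinc_le_inv_abs {x : ℝ} (hx : x ≠ 0) : |sinc x| ≤ |x|⁻¹ := by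
  simpa [sinc_of_ne_zero hx, abs_div, div_eq_mul_inv] using
    mul_le_mul_of_nonneg_right (abs_sin_le_one x) (inv_nonneg.2 (abs_nonneg x))

theorem sinc_pow_two_mul_nonneg (x : ℝ) (k : ℕ) : 0 ≤ sinc x ^ (2 * k) :=
  (even_two_mul k).pow_nonneg _

theorem sinc_pow_two_mul_le_one (x : ℝ) (k : ℕ) : sinc x ^ (2 * k) ≤ 1 := by
  rw [← (even_two_mul k).pow_abs]
  exact pow_le_one₀ (abs_nonneg _) (abs_sinc_le_one x)

theorem sinc_pi_mul_div_pow_le {k : ℕ} {x : ℝ} (hx : k ≤ |x|) :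
    sinc (π * x / k) ^ (2 * k) ≤ (π ^ (2 * k))⁻¹ := by
  rcases Nat.eq_zero_or_pos k with rfl | hk
  · simp
  have hk : (0 : ℝ) < k := Nat.cast_pos.2 hk
  have hπ : π ≤ |π * x / k| := by
    rw [abs_div, abs_mul, abs_of_pos pi_pos, Nat.abs_cast, le_div_iff₀ hk]
    exact mul_le_mul_of_nonneg_left hx pi_pos.le
  have hne : π * x / k ≠ 0 := abs_pos.1 (pi_pos.trans_le hπ)
  rw [← (even_two_mul k).pow_abs, ← inv_pow]
  gcongr
  exact (abs_sinc_le_inv_abs hne).trans (inv_anti₀ pi_pos hπ)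

theorem exp_mul_inv_pi_pow_le_one (k : ℕ) : exp k * (π ^ (2 * k))⁻¹ ≤ 1 := by
  have he : exp 1 ≤ π ^ 2 := by nlinarith [exp_one_lt_d9, pi_gt_three]
  rw [← div_eq_mul_inv, div_le_one (by positivity), ← exp_one_pow, pow_mul]
  gcongr

end Real

theorem stmt9_general (n : ℕ) (hn : 1 ≤ n) (g : ℝ → ℝ) (hg0 : g 0 = 1)
    (hg : ∀ t : ℝ, t ≠ 0 → g t = Real.sin t / t)
    (k : ℕ) (η : EuclideanSpace ℝ (Fin n)) (hη : (k : ℝ) ≤ ‖η‖) :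
    Real.exp k * ∏ i : Fin n, g (Real.pi * (Real.sqrt n * η i) / k) ^ (2 * k) ≤ 1 := by
  obtain rfl : g = sinc := funext fun t => by
    rcases eq_or_ne t 0 with rfl | ht
    · rw [hg0, sinc_zero]
    · rw [hg t ht, sinc_of_ne_zero ht]
  have : NeZero n := ⟨by omega⟩
  obtain ⟨i, hi⟩ := EuclideanSpace.exists_norm_le_sqrt_card_mul_abs η
  rw [Fintype.card_fin] at hi
  have hcoord : (k : ℝ) ≤ |√n * η i| := by
    rw [abs_mul, abs_of_nonneg (sqrt_nonneg _)]
    exact hη.trans hi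
  have hprod : ∏ j, sinc (π * (√n * η j) / k) ^ (2 * k) ≤ (π ^ (2 * k))⁻¹ :=
    calc ∏ j, sinc (π * (√n * η j) / k) ^ (2 * k)
        ≤ ∏ j ∈ {i}, sinc (π * (√n * η j) / k) ^ (2 * k) :=
          Finset.prod_le_prod_of_subset_of_le_one (Finset.subset_univ _)
            (fun _ _ => sinc_pow_two_mul_nonneg _ _) (fun _ _ _ => sinc_pow_two_mul_le_one _ _)
      _ ≤ (π ^ (2 * k))⁻¹ := by
          rw [Finset.prod_singleton]
          exact sinc_pi_mul_div_pow_le hcoord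
  calc exp k * ∏ j, sinc (π * (√n * η j) / k) ^ (2 * k)
      ≤ exp k * (π ^ (2 * k))⁻¹ := by gcongr
    _ ≤ 1 := exp_mul_inv_pi_pow_le_one k

/-- Let `g(t) = sin(t)/t` for `t ≠ 0`, `g(0) = 1`, and for `k ≥ 1` let
`H_k(ξ) = ∏ᵢ g(πξᵢ/k)^{2k}` on `ℝⁿ`. Then for every `k ≥ 1` and every `η ∈ ℝⁿ` with
`‖η‖ ≥ k`, one has `e^k ⬝ H_k(√n ⬝ η) ≤ 1`. -/
theorem stmt9 (n : ℕ) (hn : 1 ≤ n) (g : ℝ → ℝ) (hg0 : g 0 = 1)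
    (hg : ∀ t : ℝ, t ≠ 0 → g t = Real.sin t / t)
    (k : ℕ) (hk : 1 ≤ k) (η : EuclideanSpace ℝ (Fin n)) (hη : (k : ℝ) ≤ ‖η‖) :
    Real.exp k * ∏ i : Fin n, g (Real.pi * (Real.sqrt n * η i) / k) ^ (2 * k) ≤ 1 :=
  stmt9_general n hn g hg0 hg k η hη
end

section
/- Let n ≥ 1 and let P be a nonzero polynomial in n complex variables. Then the function ζ ↦ P(ζ) on ℂⁿ is slowly decreasing: there exists a constant A > 0 such that for every ξ ∈ ℝⁿ there is a point ζ ∈ ℂⁿ with ‖ζ − ξ‖ < A·log(2 + ‖ξ‖) and |P(ζ)| > (A + ‖ξ‖)^{−A}. -/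
/-!
Pick a direction `v` on which the top-degree homogeneous part `P_d` of `P` does not vanish.
On every line `t ↦ ξ + t v` the polynomial `P` restricts to a one-variable polynomial of degree
`d` with leading coefficient `P_d(v)`, independent of `ξ`. Among the `d + 1` integers
`0, …, d` one lies at distance at least `1/2` from all `d` roots, so at that point
`|P(ξ + k v)| ≥ |P_d(v)| / 2^d`, while `ξ + k v` stays within the fixed distance `d ‖v‖` of `ξ`.
-/

open Polynomial

lemma Complex.natCast_eq_of_norm_sub_lt_half {k l : ℕ} {z : ℂ} (hk : ‖(k : ℂ) - z‖ < 1 / 2)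
    (hl : ‖(l : ℂ) - z‖ < 1 / 2) : k = l := by
  by_contra hne
  have hkl : 1 ≤ ‖(k : ℂ) - l‖ := by
    have : 1 ≤ dist k l := Nat.pairwise_one_le_dist hne
    rwa [← Nat.dist_cast_real, Real.dist_eq, ← Real.norm_eq_abs, ← Complex.norm_real,
      Complex.ofReal_sub, Complex.ofReal_natCast, Complex.ofReal_natCast] at this
  have := norm_sub_le_norm_sub_add_norm_sub (k : ℂ) z l
  rw [norm_sub_rev z] at this
  linarith

lemma Multiset.exists_nat_le_card_forall_half_le_norm_sub (s : Multiset ℂ) :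
    ∃ k ≤ Multiset.card s, ∀ z ∈ s, 1 / 2 ≤ ‖(k : ℂ) - z‖ := by
  classical
  by_contra! hclose
  choose z hz using fun k : Finset.range (Multiset.card s + 1) =>
    hclose k (Finset.mem_range_succ_iff.1 k.2)
  obtain ⟨k, l, hkl, hzkl⟩ := Fintype.exists_ne_map_eq_of_card_lt
    (fun k => (⟨z k, Multiset.mem_toFinset.2 (hz k).1⟩ : s.toFinset)) (by
      rw [Fintype.card_coe, Fintype.card_coe, Finset.card_range]
      exact Nat.lt_succ_of_le (Multiset.toFinset_card_le s))
  refine hkl (Subtype.ext (Complex.natCast_eq_of_norm_sub_lt_half (hz k).2 ?_))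
  have hzkl : z k = z l := congrArg Subtype.val hzkl
  exact hzkl ▸ (hz l).2

lemma Multiset.pow_card_le_norm_prod_map_sub {s : Multiset ℂ} {c : ℝ} {w : ℂ} (hc : 0 ≤ c)
    (h : ∀ z ∈ s, c ≤ ‖w - z‖) :
    c ^ Multiset.card s ≤ ‖(s.map fun z => w - z).prod‖ := by
  rw [← Multiset.prod_replicate, ← Multiset.map_const', ← normHom_apply,
    map_multiset_prod, Multiset.map_map]
  exact Multiset.prod_map_le_prod_map₀ _ _ (fun _ _ => hc) h

lemma Polynomial.exists_le_natDegree_leadingCoeff_div_le_norm_eval (q : ℂ[X]) :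
    ∃ k ≤ q.natDegree, ‖q.leadingCoeff‖ / 2 ^ q.natDegree ≤ ‖q.eval (k : ℂ)‖ := by
  have hq : q.Splits := IsAlgClosed.splits q
  have hcard : Multiset.card q.roots = q.natDegree := splits_iff_card_roots.1 hq
  obtain ⟨k, hk, hfar⟩ := q.roots.exists_nat_le_card_forall_half_le_norm_sub
  refine ⟨k, hcard ▸ hk, ?_⟩
  rw [hq.eval_eq_prod_roots, norm_mul, div_eq_mul_inv, ← inv_pow, ← one_div, ← hcard]
  gcongr
  exact Multiset.pow_card_le_norm_prod_map_sub (by norm_num) hfar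

lemma Finsupp.prod_map_toMultiset {α M : Type*} [CommMonoid M] (f : α →₀ ℕ) (g : α → M) :
    (f.toMultiset.map g).prod = f.prod fun a n => g a ^ n := by
  rw [toMultiset_map, prod_toMultiset,
    prod_mapDomain_index (fun _ => pow_zero _) (fun _ _ _ => pow_add _ _ _)]

lemma Finsupp.card_toMultiset_eq_degree {α : Type*} (f : α →₀ ℕ) :
    Multiset.card f.toMultiset = f.degree :=
  card_toMultiset f

namespace MvPolynomial

variable {σ R : Type*} [CommRing R]

noncomputable def lineRestriction (ξ v : σ → R) : MvPolynomial σ R →ₐ[R] R[X] :=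
  aeval fun i => Polynomial.C (v i) * Polynomial.X + Polynomial.C (ξ i)

lemma degree_le_totalDegree {P : MvPolynomial σ R} {m : σ →₀ ℕ} (hm : m ∈ P.support) :
    m.degree ≤ P.totalDegree :=
  le_totalDegree hm

variable (ξ v : σ → R)

lemma eval_lineRestriction (P : MvPolynomial σ R) (t : R) :
    (lineRestriction ξ v P).eval t = eval (ξ + t • v) P := by
  induction P using MvPolynomial.induction_on with
  | C a => simp [lineRestriction]
  | add p q hp hq => simp [hp, hq]
  | mul_X p i hp => simp_all [lineRestriction]; ring

lemma lineRestriction_monomial (m : σ →₀ ℕ) (c : R) :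
    lineRestriction ξ v (monomial m c) = Polynomial.C c *
      (m.toMultiset.map fun i => Polynomial.C (v i) * Polynomial.X + Polynomial.C (ξ i)).prod := by
  rw [lineRestriction, aeval_monomial, Finsupp.prod_map_toMultiset]
  rfl

lemma natDegree_lineRestriction_monomial_le (m : σ →₀ ℕ) (c : R) :
    (lineRestriction ξ v (monomial m c)).natDegree ≤ m.degree := by
  rw [lineRestriction_monomial]
  refine natDegree_C_mul_le _ _ |>.trans <| natDegree_multiset_prod_le _ |>.trans ?_
  rw [Multiset.map_map]
  refine (Multiset.sum_map_le_sum_map _ (fun _ => 1) fun i _ => natDegree_linear_le).trans_eq ?_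
  simp only [Multiset.map_const', Multiset.sum_replicate, smul_eq_mul, mul_one]
  exact Finsupp.card_toMultiset_eq_degree m

lemma coeff_lineRestriction_monomial_degree (m : σ →₀ ℕ) (c : R) :
    (lineRestriction ξ v (monomial m c)).coeff m.degree = eval v (monomial m c) := by
  have h := coeff_multiset_prod_of_natDegree_le
    (m.toMultiset.map fun i => Polynomial.C (v i) * Polynomial.X + Polynomial.C (ξ i)) 1
    (Multiset.forall_mem_map_iff.2 fun i _ => natDegree_linear_le)
  rw [Multiset.card_map, mul_one, Finsupp.card_toMultiset_eq_degree, Multiset.map_map] at h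
  rw [lineRestriction_monomial, Polynomial.coeff_C_mul, eval_monomial, h,
    ← Finsupp.prod_map_toMultiset]
  congr 2
  refine Multiset.map_congr rfl fun i _ => ?_
  simp

lemma natDegree_lineRestriction_le (P : MvPolynomial σ R) :
    (lineRestriction ξ v P).natDegree ≤ P.totalDegree := by
  conv_lhs => rw [P.as_sum, map_sum]
  exact natDegree_sum_le_of_forall_le _ _ fun m hm =>
    (natDegree_lineRestriction_monomial_le ξ v m _).trans (degree_le_totalDegree hm)

lemma coeff_lineRestriction_totalDegree (P : MvPolynomial σ R) :
    (lineRestriction ξ v P).coeff P.totalDegree =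
      eval v (homogeneousComponent P.totalDegree P) := by
  conv_lhs => enter [1]; rw [P.as_sum]
  rw [map_sum, Polynomial.finsetSum_coeff, homogeneousComponent_apply, map_sum, Finset.sum_filter]
  refine Finset.sum_congr rfl fun m hm => ?_
  split_ifs with hdeg
  · rw [← hdeg, coeff_lineRestriction_monomial_degree]
  · exact coeff_eq_zero_of_natDegree_lt <| (natDegree_lineRestriction_monomial_le ξ v m _).trans_lt
      ((degree_le_totalDegree hm).lt_of_ne hdeg)

variable {ξ v} in
lemma natDegree_lineRestriction {P : MvPolynomial σ R}
    (hv : eval v (homogeneousComponent P.totalDegree P) ≠ 0) :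
    (lineRestriction ξ v P).natDegree = P.totalDegree :=
  (natDegree_lineRestriction_le ξ v P).antisymm <|
    le_natDegree_of_ne_zero <| by rwa [coeff_lineRestriction_totalDegree]

variable {ξ v} in
lemma leadingCoeff_lineRestriction {P : MvPolynomial σ R}
    (hv : eval v (homogeneousComponent P.totalDegree P) ≠ 0) :
    (lineRestriction ξ v P).leadingCoeff = eval v (homogeneousComponent P.totalDegree P) := by
  rw [leadingCoeff, natDegree_lineRestriction hv, coeff_lineRestriction_totalDegree]

lemma homogeneousComponent_totalDegree_ne_zero {P : MvPolynomial σ R} (hP : P ≠ 0) :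
    homogeneousComponent P.totalDegree P ≠ 0 := by
  obtain ⟨m, hm, hdeg⟩ : ∃ m ∈ P.support, P.totalDegree = m.degree :=
    Finset.exists_mem_eq_sup _ (support_nonempty.2 hP) _
  intro h0
  have hcoeff := coeff_homogeneousComponent P.totalDegree P m
  rw [h0, coeff_zero, if_pos hdeg.symm] at hcoeff
  exact mem_support_iff.1 hm hcoeff.symm

lemma exists_eval_homogeneousComponent_totalDegree_ne_zero [IsDomain R] [Infinite R]
    {P : MvPolynomial σ R} (hP : P ≠ 0) :
    ∃ v : σ → R, eval v (homogeneousComponent P.totalDegree P) ≠ 0 := by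
  by_contra! h
  exact homogeneousComponent_totalDegree_ne_zero hP (funext fun x => by simpa using h x)

lemma exists_norm_eval_add_nat_smul_ge {P : MvPolynomial σ ℂ} (hP : P ≠ 0) :
    ∃ v : σ → ℂ, ∃ ε > 0, ∀ ξ : σ → ℂ,
      ∃ k ≤ P.totalDegree, ε ≤ ‖eval (ξ + (k : ℂ) • v) P‖ := by
  obtain ⟨v, hv⟩ := exists_eval_homogeneousComponent_totalDegree_ne_zero hP
  refine ⟨v, _, div_pos (norm_pos_iff.2 hv) (pow_pos two_pos P.totalDegree), fun ξ => ?_⟩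
  obtain ⟨k, hk, hbound⟩ :=
    (lineRestriction ξ v P).exists_le_natDegree_leadingCoeff_div_le_norm_eval
  rw [natDegree_lineRestriction hv, leadingCoeff_lineRestriction hv,
    eval_lineRestriction] at hbound
  exact ⟨k, natDegree_lineRestriction (ξ := ξ) hv ▸ hk, hbound⟩

end MvPolynomial

lemma Real.add_rpow_neg_self_le_inv {A x : ℝ} (hA : 1 ≤ A) (hx : 0 ≤ x) :
    (A + x) ^ (-A) ≤ A⁻¹ :=
  calc (A + x) ^ (-A) ≤ A ^ (-A) := rpow_le_rpow_of_nonpos (by linarith) (by linarith) (by linarith)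
    _ ≤ A ^ (-1 : ℝ) := rpow_le_rpow_of_exponent_le hA (by linarith)
    _ = A⁻¹ := rpow_neg_one A

theorem stmt10_general (n : ℕ) (P : MvPolynomial (Fin n) ℂ) (hP : P ≠ 0) :
    ∃ A > (0 : ℝ), ∀ ξ : EuclideanSpace ℝ (Fin n),
      ∃ ζ : EuclideanSpace ℂ (Fin n),
        ‖ζ - (WithLp.equiv 2 (Fin n → ℂ)).symm (fun i => (ξ i : ℂ))‖ <
            A * Real.log (2 + ‖ξ‖) ∧
        (A + ‖ξ‖) ^ (-A) < ‖MvPolynomial.eval (fun i => ζ i) P‖ := by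
  obtain ⟨v, ε, hε, hline⟩ := P.exists_norm_eval_add_nat_smul_ge hP
  set V := ‖WithLp.toLp 2 v‖
  have hlog2 : 0 < Real.log 2 := Real.log_pos one_lt_two
  set A := 1 + ε⁻¹ + P.totalDegree * V / Real.log 2 with hA
  have hdV : 0 ≤ P.totalDegree * V / Real.log 2 := by positivity
  have hA_one : 1 ≤ A := by rw [hA]; linarith [inv_pos.2 hε]
  have hA_ε : ε⁻¹ < A := by rw [hA]; linarith
  have hA_V : P.totalDegree * V < A * Real.log 2 := by
    have : 0 < (1 + ε⁻¹) * Real.log 2 := by positivity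
    rw [hA, add_mul, div_mul_cancel₀ _ hlog2.ne']
    linarith
  refine ⟨A, by linarith, fun ξ => ?_⟩
  obtain ⟨k, hk, hbound⟩ := hline fun i => (ξ i : ℂ)
  refine ⟨WithLp.toLp 2 ((fun i => (ξ i : ℂ)) + (k : ℂ) • v), ?_, ?_⟩
  · rw [WithLp.equiv_symm_apply, ← WithLp.toLp_sub, add_sub_cancel_left, WithLp.toLp_smul,
      norm_smul, Complex.norm_natCast]
    calc k * V ≤ P.totalDegree * V := by gcongr
      _ < A * Real.log 2 := hA_V
      _ ≤ A * Real.log (2 + ‖ξ‖) := by gcongr; linarith [norm_nonneg ξ]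
  · calc (A + ‖ξ‖) ^ (-A) ≤ A⁻¹ := Real.add_rpow_neg_self_le_inv hA_one (norm_nonneg ξ)
      _ < ε := by rwa [inv_lt_comm₀ (by linarith) hε]
      _ ≤ _ := hbound

/-- A nonzero polynomial `P` in `n` complex variables is slowly decreasing
in the sense of Ehrenpreis: there is `A > 0` such that for every `ξ ∈ ℝⁿ` there is a point
`ζ ∈ ℂⁿ` with `‖ζ - ξ‖ < A log(2 + ‖ξ‖)` (`ξ` viewed in `ℂⁿ` via the standard inclusion)
and `|P(ζ)| > (A + ‖ξ‖)^{-A}`. -/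
theorem stmt10 (n : ℕ) (hn : 1 ≤ n) (P : MvPolynomial (Fin n) ℂ) (hP : P ≠ 0) :
    ∃ A > (0 : ℝ), ∀ ξ : EuclideanSpace ℝ (Fin n),
      ∃ ζ : EuclideanSpace ℂ (Fin n),
        ‖ζ - (WithLp.equiv 2 (Fin n → ℂ)).symm (fun i => (ξ i : ℂ))‖ <
            A * Real.log (2 + ‖ξ‖) ∧
        (A + ‖ξ‖) ^ (-A) < ‖MvPolynomial.eval (fun i => ζ i) P‖ :=
  stmt10_general n P hP
end
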